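/- arXiv:0905.3777 — 9 statements merged into one kernel-verified Lean document; each statement's English description precedes it below -/
import Mathlib

section
/- Let V be a metrizable real topological vector space and let (S_i)_{i∈ℕ} be an increasing sequence (S_1 ⊆ S_2 ⊆ ...) of absolutely convex subsets of V such that every von Neumann bounded subset of V is contained in some S_i. Then there exists an index i such that S_i absorbs every von Neumann bounded subset of V; that is, for every bounded B ⊆ V there is λ > 0 with B ⊆ λ·S_i. -/
open Pointwise Filter Topology Set Bornology

/-!
Suppose no `S i` absorbs all bounded sets. Then for each `i` there is a null sequence lying
outside `S i`, obtained by shrinking a bounded set not absorbed by `S i`. Metrizability makes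
`0` have a countable neighbourhood basis, so a diagonal choice, one term from the `i`-th
sequence, is again a null sequence. Its range is bounded, hence inside some `S k`, which
contradicts the choice of its `k`-th term.
-/

theorem exists_tendsto_diag_of_forall_tendsto {X ι : Type*} [TopologicalSpace X]
    [FirstCountableTopology X] {l : Filter ι} [l.NeBot] {f : ℕ → ι → X} {a : X}
    (h : ∀ i, Tendsto (f i) l (𝓝 a)) : ∃ φ : ℕ → ι, Tendsto (fun i ↦ f i (φ i)) atTop (𝓝 a) := by
  obtain ⟨u, hu⟩ := (𝓝 a).exists_antitone_basis
  choose φ hφ using fun i ↦ ((h i).eventually (eventually_mem_set.mpr (hu.mem i))).exists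
  exact ⟨φ, hu.tendsto hφ⟩

theorem Bornology.IsVonNBounded.exists_tendsto_zero_notMem {V : Type*} [AddCommGroup V]
    [Module ℝ V] [TopologicalSpace V] {B S : Set V} (hB : IsVonNBounded ℝ B)
    (hBS : ∀ l : ℝ, 0 < l → ¬B ⊆ l • S) :
    ∃ y : ℕ → V, Tendsto y atTop (𝓝 0) ∧ ∀ n, y n ∉ S := by
  choose x hxB hxS using fun n : ℕ ↦ not_subset.mp (hBS ((n : ℝ) + 1) (by positivity))
  have hε : Tendsto (fun n : ℕ ↦ ((n : ℝ) + 1)⁻¹) atTop (𝓝 0) :=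
    (tendsto_atTop_add_const_right _ 1 tendsto_natCast_atTop_atTop).inv_tendsto_atTop
  refine ⟨fun n ↦ ((n : ℝ) + 1)⁻¹ • x n, hB.smul_tendsto_zero (.of_forall hxB) hε,
    fun n hn ↦ hxS n ?_⟩
  rwa [mem_smul_set_iff_inv_smul_mem₀ (by positivity)]

theorem stmt3_general (V : Type*)
    [AddCommGroup V] [Module ℝ V] [TopologicalSpace V] [IsTopologicalAddGroup V]
    [ContinuousSMul ℝ V] [TopologicalSpace.MetrizableSpace V]
    (S : ℕ → Set V)
    (hcontain : ∀ B : Set V, Bornology.IsVonNBounded ℝ B → ∃ i, B ⊆ S i) :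
    ∃ i, ∀ B : Set V, Bornology.IsVonNBounded ℝ B → ∃ l : ℝ, 0 < l ∧ B ⊆ l • S i := by
  by_contra! h
  choose B hB hBS using h
  choose y hy hyS using fun i ↦ (hB i).exists_tendsto_zero_notMem (hBS i)
  obtain ⟨φ, hφ⟩ := exists_tendsto_diag_of_forall_tendsto hy
  obtain ⟨k, hk⟩ := hcontain _ (hφ.isVonNBounded_range ℝ)
  exact hyS k (φ k) (hk (mem_range_self k))

/-- **(Köthe's lemma.)** Let `V` be a metrizable real topological vector space and
`S : ℕ → Set V` an increasing sequence of absolutely convex (convex and balanced)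
subsets such that every von Neumann bounded subset of `V` is contained in some `S i`.
Then some `S i` absorbs every von Neumann bounded subset of `V`: for every bounded `B`
there is `λ > 0` with `B ⊆ λ • S i`. -/
theorem stmt3 (V : Type*)
    [AddCommGroup V] [Module ℝ V] [TopologicalSpace V] [IsTopologicalAddGroup V]
    [ContinuousSMul ℝ V] [TopologicalSpace.MetrizableSpace V]
    (S : ℕ → Set V) (hmono : Monotone S)
    (hconv : ∀ i, Convex ℝ (S i)) (hbal : ∀ i, Balanced ℝ (S i))
    (hcontain : ∀ B : Set V, Bornology.IsVonNBounded ℝ B → ∃ i, B ⊆ S i) :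
    ∃ i, ∀ B : Set V, Bornology.IsVonNBounded ℝ B → ∃ l : ℝ, 0 < l ∧ B ⊆ l • S i :=
  stmt3_general V S hcontain
end

section
/- Let V be a Fréchet space (a complete metrizable locally convex real topological vector space), let V* be its topological dual, and let P be a V*-palette on V that contains every convex compact subset of V. If the palette topology τ_P on V* is metrizable, then some element of P has nonempty interior in V. -/
/-!
Suppose no member of `P` has interior. Metrizability of `τ_P` gives a countable base of
neighbourhoods of `0`, and each of them contains the open polar of some `q n ∈ P`. The closed
absolutely convex hulls `C n` of `q n ∪ {0}` lie in `P`, hence are closed with empty interior,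
so by Baire's theorem some `v` lies outside all of them. As `{v} ∈ P`, the set `{f | f v < 1}`
is a `τ_P`-neighbourhood of `0` and so contains the polar of some `q n`; but Hahn–Banach
separates `v` from `C n` by a functional `g` with `|g| < 1` on `C n` and `g v > 1`.
-/

open Pointwise Filter Set

section

variable {V : Type*} [AddCommGroup V] [Module ℝ V] [TopologicalSpace V]

abbrev paletteTopology (P : Set (Set V)) : TopologicalSpace (V →L[ℝ] ℝ) :=
  TopologicalSpace.generateFrom
    {S | ∃ p ∈ P, ∃ O : Set ℝ, IsOpen O ∧ S = {f : V →L[ℝ] ℝ | ∀ x ∈ p, f x ∈ O}}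

def strictPolar (s : Set V) : Set (V →L[ℝ] ℝ) := {f | ∀ x ∈ s, |f x| < 1}

theorem strictPolar_antitone : Antitone (strictPolar (V := V)) :=
  fun _ _ hst _ hf x hx => hf x (hst hx)

theorem exists_strictPolar_subset_of_zero_mem {P : Set (Set V)}
    (hsmul : ∀ p ∈ P, ∀ c : ℝ, c • p ∈ P) {p : Set V} (hp : p ∈ P) {O : Set ℝ} (hO : IsOpen O)
    (h0 : (0 : V →L[ℝ] ℝ) ∈ {f : V →L[ℝ] ℝ | ∀ x ∈ p, f x ∈ O}) :
    ∃ q ∈ P, strictPolar q ⊆ {f : V →L[ℝ] ℝ | ∀ x ∈ p, f x ∈ O} := by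
  rcases p.eq_empty_or_nonempty with rfl | ⟨x₀, hx₀⟩
  · exact ⟨∅, hp, fun _ _ x hx => hx.elim⟩
  obtain ⟨ε, hε, hball⟩ := Metric.isOpen_iff.1 hO 0 (h0 x₀ hx₀)
  refine ⟨ε⁻¹ • p, hsmul p hp ε⁻¹, fun f hf x hx => hball ?_⟩
  have := hf _ (smul_mem_smul_set hx)
  rw [map_smul, smul_eq_mul, abs_mul, abs_inv, abs_of_pos hε, inv_mul_lt_iff₀ hε, mul_one] at this
  simpa [Real.dist_eq] using this

theorem exists_strictPolar_subset_of_mem_nhds_zero {P : Set (Set V)} (hne : P.Nonempty)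
    (hunion : ∀ p ∈ P, ∀ q ∈ P, p ∪ q ∈ P) (hsmul : ∀ p ∈ P, ∀ c : ℝ, c • p ∈ P)
    {U : Set (V →L[ℝ] ℝ)} (hU : U ∈ @nhds _ (paletteTopology P) 0) :
    ∃ q ∈ P, strictPolar q ⊆ U := by
  have hbasis : (⨅ q ∈ P, 𝓟 (strictPolar q)).HasBasis (· ∈ P) strictPolar :=
    hasBasis_biInf_principal (fun p hp q hq => ⟨p ∪ q, hunion p hp q hq,
      strictPolar_antitone subset_union_left, strictPolar_antitone subset_union_right⟩) hne
  have hle : ⨅ q ∈ P, 𝓟 (strictPolar q) ≤ @nhds _ (paletteTopology P) 0 := by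
    rw [paletteTopology, TopologicalSpace.nhds_generateFrom]
    simp only [le_iInf_iff, le_principal_iff]
    rintro _ ⟨h0, p, hp, O, hO, rfl⟩
    obtain ⟨q, hq, hqsub⟩ := exists_strictPolar_subset_of_zero_mem hsmul hp hO h0
    exact hbasis.mem_iff.2 ⟨q, hq, hqsub⟩
  exact hbasis.mem_iff.1 (hle hU)

variable [IsTopologicalAddGroup V] [ContinuousSMul ℝ V]

theorem closedAbsConvexHull_insert_zero_mem {P : Set (Set V)}
    (hunion : ∀ p ∈ P, ∀ q ∈ P, p ∪ q ∈ P) (hsmul : ∀ p ∈ P, ∀ c : ℝ, c • p ∈ P)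
    (hhull : ∀ p ∈ P, ∀ v : V, closure (convexHull ℝ (p ∪ {v})) ∈ P) {q : Set V} (hq : q ∈ P) :
    closedAbsConvexHull ℝ (insert 0 q) ∈ P := by
  have := hhull _ (hunion _ hq _ (hsmul _ hq (-1))) 0
  rw [neg_smul_set, one_smul] at this
  convert this using 1
  rw [closedAbsConvexHull_eq_closure_absConvexHull, ← convexHull_union_neg_eq_absConvexHull,
    neg_insert, neg_zero, insert_union, union_insert, insert_idem, union_singleton]

variable [LocallyConvexSpace ℝ V]

theorem exists_mem_strictPolar_one_lt_apply_of_notMem {C : Set V} (hC : AbsConvex ℝ C)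
    (hCc : IsClosed C) (h0 : (0 : V) ∈ C) {v : V} (hv : v ∉ C) :
    ∃ g ∈ strictPolar C, 1 < g v := by
  obtain ⟨f, u, hfC, hfv⟩ := geometric_hahn_banach_closed_point hC.2 hCc hv
  have hu : 0 < u := by simpa using hfC 0 h0
  refine ⟨u⁻¹ • f, fun x hx => ?_, ?_⟩
  · have hneg : -f x < u := by simpa using hfC (-x) (hC.1.neg_mem_iff.2 hx)
    have hlt : |f x| < u := abs_lt.2 ⟨by linarith, hfC x hx⟩
    rw [smul_apply, smul_eq_mul, abs_mul, abs_inv, abs_of_pos hu,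
      inv_mul_lt_iff₀ hu, mul_one]
    exact hlt
  · rw [smul_apply, smul_eq_mul, lt_inv_mul_iff₀ hu, mul_one]
    exact hfv

end

theorem stmt5_general (V : Type*)
    [AddCommGroup V] [Module ℝ V] [UniformSpace V] [IsUniformAddGroup V]
    [ContinuousSMul ℝ V] [LocallyConvexSpace ℝ V] [CompleteSpace V]
    [TopologicalSpace.MetrizableSpace V]
    (P : Set (Set V))
    (h2 : ∀ p ∈ P, ∀ q ∈ P, p ∪ q ∈ P)
    (h3 : ∀ p ∈ P, ∀ c : ℝ, c • p ∈ P)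
    (h4 : ∀ p ∈ P, ∀ v : V, closure (convexHull ℝ (p ∪ {v})) ∈ P)
    (hcc : ∀ K : Set V, IsCompact K → Convex ℝ K → K ∈ P)
    (τP : TopologicalSpace (V →L[ℝ] ℝ))
    (hτP : τP = TopologicalSpace.generateFrom
      {S : Set (V →L[ℝ] ℝ) | ∃ p ∈ P, ∃ O : Set ℝ, IsOpen O ∧
        S = {f : V →L[ℝ] ℝ | ∀ x ∈ p, f x ∈ O}})
    (hmetr : @TopologicalSpace.MetrizableSpace (V →L[ℝ] ℝ) τP) :
    ∃ p ∈ P, (interior p).Nonempty := by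
  subst hτP
  let _ : TopologicalSpace (V →L[ℝ] ℝ) := paletteTopology P
  -- makes the complete space `V` a Baire space
  have : (uniformity V).IsCountablyGenerated := IsUniformAddGroup.uniformity_countably_generated
  by_contra! hcon
  have hsingleton (v : V) : {v} ∈ P := hcc _ isCompact_singleton (convex_singleton v)
  obtain ⟨U, hU⟩ := (nhds (0 : V →L[ℝ] ℝ)).exists_antitone_basis
  choose q hqP hqU using fun n => exists_strictPolar_subset_of_mem_nhds_zero
    ⟨_, hsingleton 0⟩ h2 h3 (hU.mem n)
  set C : ℕ → Set V := fun n => closedAbsConvexHull ℝ (insert 0 (q n))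
  obtain ⟨v, hv⟩ : ∃ v, ∀ n, v ∉ C n := by
    by_contra! hcover
    obtain ⟨n, hn⟩ := nonempty_interior_of_iUnion_of_closed
      (fun n => isClosed_closedAbsConvexHull) (iUnion_eq_univ_iff.2 hcover)
    exact hn.ne_empty (hcon _ (closedAbsConvexHull_insert_zero_mem h2 h3 h4 (hqP n)))
  have hT : {f : V →L[ℝ] ℝ | ∀ x ∈ ({v} : Set V), f x ∈ Iio 1} ∈ nhds 0 := by
    refine IsOpen.mem_nhds (TopologicalSpace.isOpen_generateFrom_of_mem ?_) (by simp)
    exact ⟨_, hsingleton v, _, isOpen_Iio, rfl⟩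
  obtain ⟨n, hn⟩ := hU.mem_iff.1 hT
  obtain ⟨g, hgC, hgv⟩ := exists_mem_strictPolar_one_lt_apply_of_notMem
    absConvex_convexClosedHull isClosed_closedAbsConvexHull
    (subset_closedAbsConvexHull (mem_insert _ _)) (hv n)
  have hgq : g ∈ strictPolar (q n) :=
    strictPolar_antitone ((subset_insert _ _).trans subset_closedAbsConvexHull) hgC
  exact hgv.not_gt (hn (hqU n hgq) v rfl)

/-- Let `V` be a Fréchet space (complete metrizable locally convex real tvs), `V*` its
topological dual, and `P` a `V*`-palette on `V` containing all convex compact subsets.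
If the palette topology `τ_P` on `V*` is metrizable, then some member of `P` has
nonempty interior in `V`. -/
theorem stmt5 (V : Type*)
    [AddCommGroup V] [Module ℝ V] [UniformSpace V] [IsUniformAddGroup V]
    [ContinuousSMul ℝ V] [LocallyConvexSpace ℝ V] [CompleteSpace V]
    [TopologicalSpace.MetrizableSpace V]
    (P : Set (Set V))
    (h1 : ∀ p ∈ P, Bornology.IsVonNBounded ℝ p)
    (h2 : ∀ p ∈ P, ∀ q ∈ P, p ∪ q ∈ P)
    (h3 : ∀ p ∈ P, ∀ c : ℝ, c • p ∈ P)
    (h4 : ∀ p ∈ P, ∀ v : V, closure (convexHull ℝ (p ∪ {v})) ∈ P)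
    (h5 : Dense (⋃ p ∈ P, p))
    (hcc : ∀ K : Set V, IsCompact K → Convex ℝ K → K ∈ P)
    (τP : TopologicalSpace (V →L[ℝ] ℝ))
    (hτP : τP = TopologicalSpace.generateFrom
      {S : Set (V →L[ℝ] ℝ) | ∃ p ∈ P, ∃ O : Set ℝ, IsOpen O ∧
        S = {f : V →L[ℝ] ℝ | ∀ x ∈ p, f x ∈ O}})
    (hmetr : @TopologicalSpace.MetrizableSpace (V →L[ℝ] ℝ) τP) :
    ∃ p ∈ P, (interior p).Nonempty :=
  stmt5_general V P h2 h3 h4 hcc τP hτP hmetr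
end

section
/- Let V be a metrizable locally convex real topological vector space. If the topological dual V*, equipped with the topology of uniform convergence on compact subsets of V (the compact-open topology), is metrizable, then V is finite-dimensional. -/
/-!
Metrizability of the dual `V →L_c[ℝ] ℝ` gives a countable basis of neighborhoods of `0` of the
form `{f | |f| ≤ εₙ on Sₙ}` with `Sₙ` compact. By the Hahn–Banach separation theorem every compact
set then lies in the closed absolutely convex hull `Dₙ` of `εₙ⁻¹ • Sₙ` for some `n`. Since `V` is
first countable, some `Dₙ` must be a neighborhood of `0`: otherwise points `yₙ ∉ Dₙ` tending to
`0` form a compact set contained in no `Dₙ`. In a locally convex space the closed absolutely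
convex hull of a compact set is totally bounded, so Riesz's theorem finishes the proof.
-/

open Set Filter Topology Pointwise
open scoped CompactConvergenceCLM

theorem exists_mem_nhds_of_forall_isCompact_subset {X : Type*} [TopologicalSpace X] {x : X}
    [(𝓝 x).IsCountablyGenerated] {D : ℕ → Set X} (hD : ∀ K, IsCompact K → ∃ n, K ⊆ D n) :
    ∃ n, D n ∈ 𝓝 x := by
  obtain ⟨U, hU⟩ := (𝓝 x).exists_antitone_basis
  by_contra! h
  have hUD : ∀ n, ∃ y ∈ U n, y ∉ D n := fun n ↦
    not_subset.mp fun hsub ↦ h n (mem_of_superset (hU.mem n) hsub)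
  choose y hyU hyD using hUD
  obtain ⟨m, hm⟩ := hD _ (hU.tendsto hyU).isCompact_insert_range
  exact hyD m (hm (mem_insert_of_mem _ (mem_range_self m)))

section Dual

variable {V : Type*} [AddCommGroup V] [Module ℝ V] [TopologicalSpace V]
  [IsTopologicalAddGroup V] [ContinuousSMul ℝ V] [LocallyConvexSpace ℝ V]

theorem exists_abs_le_one_one_lt_of_notMem_closedAbsConvexHull {s : Set V} {v : V}
    (hs : s.Nonempty) (hv : v ∉ closedAbsConvexHull ℝ s) :
    ∃ f : V →L[ℝ] ℝ, (∀ x ∈ s, |f x| ≤ 1) ∧ 1 < f v := by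
  set D := closedAbsConvexHull ℝ s
  have hD : AbsConvex ℝ D := absConvex_convexClosedHull
  obtain ⟨f, u, hfD, hfv⟩ :=
    geometric_hahn_banach_closed_point hD.2 isClosed_closedAbsConvexHull hv
  have hu : 0 < u := by
    simpa using hfD 0 (hD.1.zero_mem (hs.mono subset_closedAbsConvexHull))
  refine ⟨u⁻¹ • f, fun x hx ↦ ?_, ?_⟩
  · have hxD : x ∈ D := subset_closedAbsConvexHull hx
    have hneg := hfD (-x) (hD.1.neg_mem_iff.mpr hxD)
    rw [map_neg] at hneg
    rw [smul_apply, smul_eq_mul, abs_mul, abs_inv, abs_of_pos hu,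
      inv_mul_le_iff₀ hu, mul_one, abs_le]
    constructor <;> linarith [hfD x hxD]
  · rwa [smul_apply, smul_eq_mul, lt_inv_mul_iff₀ hu, mul_one]

theorem exists_seq_isCompact_forall_subset_closedAbsConvexHull
    [(𝓝 (0 : V →L_c[ℝ] ℝ)).IsCountablyGenerated] :
    ∃ K : ℕ → Set V, (∀ n, IsCompact (K n)) ∧
      ∀ L, IsCompact L → ∃ n, L ⊆ closedAbsConvexHull ℝ (K n) := by
  have hB := CompactConvergenceCLM.hasBasis_nhds_zero_of_basis (E := V) (σ := RingHom.id ℝ)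
    (Metric.nhds_basis_closedBall (x := (0 : ℝ)))
  obtain ⟨S, hS, hSB⟩ := hB.exists_antitone_subbasis
  refine ⟨fun n ↦ insert 0 ((S n).2⁻¹ • (S n).1), fun n ↦ ((hS n).1.smul _).insert 0,
    fun L hL ↦ ?_⟩
  obtain ⟨n, -, hn⟩ := hSB.toHasBasis.mem_iff.mp (hB.mem_of_mem (i := (L, 1)) ⟨hL, one_pos⟩)
  refine ⟨n, fun v hv ↦ ?_⟩
  by_contra hvD
  obtain ⟨f, hf, hfv⟩ := exists_abs_le_one_one_lt_of_notMem_closedAbsConvexHull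
    (insert_nonempty _ _) hvD
  have hfS : ∀ x ∈ (S n).1, f x ∈ Metric.closedBall 0 (S n).2 := fun x hx ↦ by
    have := hf _ (mem_insert_of_mem _ (smul_mem_smul_set hx))
    rwa [map_smul, smul_eq_mul, abs_mul, abs_inv, abs_of_pos (hS n).2, inv_mul_le_iff₀ (hS n).2,
      mul_one, ← Real.norm_eq_abs, ← dist_zero_right, ← Metric.mem_closedBall] at this
  have hfv' := hn hfS v hv
  rw [Metric.mem_closedBall, dist_zero_right, Real.norm_eq_abs] at hfv'
  exact hfv.not_ge ((le_abs_self _).trans hfv')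

end Dual

/-- Let `V` be a metrizable locally convex real topological vector space.  If the dual
`V*`, equipped with the topology of uniform convergence on compact subsets of `V`
(here `UniformConvergenceCLM (RingHom.id ℝ) ℝ {K | IsCompact K}`), is metrizable, then
`V` is finite-dimensional. -/
theorem stmt6 (V : Type*)
    [AddCommGroup V] [Module ℝ V] [TopologicalSpace V] [IsTopologicalAddGroup V]
    [ContinuousSMul ℝ V] [LocallyConvexSpace ℝ V] [TopologicalSpace.MetrizableSpace V]
    (hmetr : TopologicalSpace.MetrizableSpace
      (UniformConvergenceCLM (RingHom.id ℝ) ℝ {K : Set V | IsCompact K})) :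
    FiniteDimensional ℝ V := by
  obtain ⟨K, hK, hKL⟩ := exists_seq_isCompact_forall_subset_closedAbsConvexHull (V := V)
  obtain ⟨n, hn⟩ := exists_mem_nhds_of_forall_isCompact_subset (x := (0 : V)) hKL
  let : UniformSpace V := IsTopologicalAddGroup.rightUniformSpace V
  have : IsUniformAddGroup V := isUniformAddGroup_of_addCommGroup
  refine .of_totallyBounded_nhds_zero ℝ hn ?_
  rw [closedAbsConvexHull_eq_closure_absConvexHull]
  exact (hK n).totallyBounded.absConvexHull.closure
end

section
/- Let V be a metrizable locally convex real topological vector space. If the topological dual V*, equipped with the strong topology of uniform convergence on von Neumann bounded subsets of V, is metrizable, then V is normable, i.e., there exists a norm on V inducing its topology. -/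
/-!
If `V` and its strong dual are first countable, then `0` has a bounded neighbourhood in `V`.
Otherwise take countable bases `U k` of `𝓝 0` in `V` and `W k` in the dual, with
`{f | ∀ y ∈ B k, |f y| < 1} ⊆ W k` for bounded sets `B k`. Pick `x k ∈ U k` outside the closed
absolutely convex hull of `B k`; Hahn–Banach gives `f k ∈ W k` with `1 < f k (x k)`. But `x k → 0`,
so `{x k}` is bounded, and the set of `f` with `|f (x j)| < 1` for all `j` is a neighbourhood of
`0` in the dual; it contains some `W k`, hence `f k`, which is absurd. Finally, the gauge of a
bounded absolutely convex neighbourhood of `0` is a norm defining the topology (Kolmogorov).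
-/

open Set Filter Bornology Topology Pointwise

section LocallyConvex

variable {E : Type*} [AddCommGroup E] [Module ℝ E] [TopologicalSpace E]

theorem Bornology.IsVonNBounded.absConvexHull [ContinuousSMul ℝ E] [LocallyConvexSpace ℝ E]
    {s : Set E} (hs : IsVonNBounded ℝ s) : IsVonNBounded ℝ (absConvexHull ℝ s) := by
  intro W hW
  obtain ⟨C, ⟨hC, hCbal, hCconv⟩, hCW⟩ := (nhds_hasBasis_absConvex ℝ E).mem_iff.1 hW
  filter_upwards [(hs hC).eventually] with c hc
  exact (absConvexHull_min hc ⟨hCbal.smul c, hCconv.smul c⟩).trans (smul_set_mono hCW)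

variable [IsTopologicalAddGroup E] [ContinuousSMul ℝ E] [LocallyConvexSpace ℝ E]

theorem Bornology.IsVonNBounded.closedAbsConvexHull [T1Space E] {s : Set E}
    (hs : IsVonNBounded ℝ s) : IsVonNBounded ℝ (closedAbsConvexHull ℝ s) := by
  rw [closedAbsConvexHull_eq_closure_absConvexHull]
  exact hs.absConvexHull.closure

theorem exists_abs_lt_one_lt_of_notMem {C : Set E} (hC : AbsConvex ℝ C) (hCc : IsClosed C)
    (h0 : (0 : E) ∈ C) {x : E} (hx : x ∉ C) :
    ∃ f : E →L[ℝ] ℝ, (∀ y ∈ C, |f y| < 1) ∧ 1 < f x := by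
  obtain ⟨f, u, hfC, hux⟩ := geometric_hahn_banach_closed_point hC.2 hCc hx
  have hu : 0 < u := by simpa using hfC 0 h0
  refine ⟨u⁻¹ • f, fun y hy => ?_, ?_⟩
  · have hneg : f (-y) < u := hfC (-y) (hC.1.neg_mem_iff.2 hy)
    rw [map_neg] at hneg
    rw [smul_apply, smul_eq_mul, abs_mul, abs_of_pos (inv_pos.2 hu),
      inv_mul_lt_one₀ hu, abs_lt]
    exact ⟨neg_lt.1 hneg, hfC y hy⟩
  · rwa [smul_apply, smul_eq_mul, lt_inv_mul_iff₀ hu, mul_one]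

end LocallyConvex

theorem ContinuousLinearMap.hasBasis_nhds_zero_abs_lt_one {E : Type*} [AddCommGroup E]
    [Module ℝ E] [TopologicalSpace E] [ContinuousConstSMul ℝ E] :
    (𝓝 (0 : E →L[ℝ] ℝ)).HasBasis (IsVonNBounded ℝ) (fun B => {f | ∀ y ∈ B, |f y| < 1}) := by
  refine ContinuousLinearMap.hasBasis_nhds_zero.to_hasBasis (fun ⟨B, O⟩ ⟨hB, hO⟩ => ?_)
    fun B hB => ⟨(B, Metric.ball 0 1), ⟨hB, Metric.ball_mem_nhds 0 one_pos⟩,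
      fun f hf y hy => by simpa using hf y hy⟩
  obtain ⟨ε, hε, hεO⟩ := Metric.mem_nhds_iff.1 hO
  refine ⟨ε⁻¹ • B, ?_, fun f hf y hy => hεO ?_⟩
  · simpa [Set.image_smul] using hB.image (ε⁻¹ • ContinuousLinearMap.id ℝ E)
  · have hfy := hf (ε⁻¹ • y) (smul_mem_smul_set hy)
    rwa [map_smul, smul_eq_mul, abs_mul, abs_of_pos (inv_pos.2 hε), inv_mul_lt_one₀ hε,
      ← Real.norm_eq_abs, ← mem_ball_zero_iff] at hfy

theorem exists_isVonNBounded_mem_nhds_zero_of_firstCountable {E : Type*} [AddCommGroup E]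
    [Module ℝ E] [TopologicalSpace E] [IsTopologicalAddGroup E] [ContinuousSMul ℝ E]
    [LocallyConvexSpace ℝ E] [T1Space E] [FirstCountableTopology E]
    [FirstCountableTopology (E →L[ℝ] ℝ)] : ∃ U ∈ 𝓝 (0 : E), IsVonNBounded ℝ U := by
  by_contra! hunb
  obtain ⟨U, hU⟩ := (𝓝 (0 : E)).exists_antitone_basis
  obtain ⟨W, hW⟩ := (𝓝 (0 : E →L[ℝ] ℝ)).exists_antitone_basis
  have hbasis := ContinuousLinearMap.hasBasis_nhds_zero_abs_lt_one (E := E)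
  choose B hB hBW using fun k => hbasis.mem_iff.1 (hW.mem k)
  have hx : ∀ k, ∃ x ∈ U k, x ∉ closedAbsConvexHull ℝ (insert 0 (B k)) := fun k =>
    not_subset.1 fun hsub => hunb _ (hU.mem k) (((hB k).insert 0).closedAbsConvexHull.subset hsub)
  choose x hxU hxA using hx
  have hf : ∀ k, ∃ f ∈ W k, 1 < f (x k) := fun k => by
    obtain ⟨f, hfA, hfx⟩ := exists_abs_lt_one_lt_of_notMem absConvex_convexClosedHull
      isClosed_closedAbsConvexHull (subset_closedAbsConvexHull (mem_insert 0 _)) (hxA k)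
    exact ⟨f, hBW k fun y hy => hfA y (subset_closedAbsConvexHull (mem_insert_of_mem 0 hy)), hfx⟩
  choose f hfW hfx using hf
  obtain ⟨k, -, hk⟩ :=
    hW.1.mem_iff.1 (hbasis.mem_of_mem ((hU.tendsto hxU).isVonNBounded_range ℝ))
  exact (hfx k).not_gt ((le_abs_self _).trans_lt (hk (hfW k) _ (mem_range_self k)))

theorem exists_seminorm_of_isVonNBounded_mem_nhds_zero {E : Type*} [AddCommGroup E] [Module ℝ E]
    [TopologicalSpace E] [ContinuousSMul ℝ E] [LocallyConvexSpace ℝ E] [T1Space E] {U : Set E}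
    (hU : U ∈ 𝓝 0) (hb : IsVonNBounded ℝ U) :
    ∃ n : Seminorm ℝ E, (∀ x, n x = 0 → x = 0) ∧
      (𝓝 (0 : E)).HasBasis (fun ε : ℝ => 0 < ε) (fun ε => {x | n x < ε}) := by
  obtain ⟨D, ⟨hD, hDbal, hDconv⟩, hDU⟩ := (nhds_hasBasis_absConvex ℝ E).mem_iff.1 hU
  have hDb : IsVonNBounded ℝ D := hb.subset hDU
  refine ⟨gaugeSeminorm hDbal hDconv (absorbent_nhds_zero hD),
    fun x hx => (gauge_eq_zero (absorbent_nhds_zero hD) hDb).1 hx, ?_⟩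
  rw [← comap_gauge_nhds_zero hDb hD]
  convert (nhds_basis_zero_abs_lt ℝ).comap (gauge D) using 3 with ε
  simp [abs_of_nonneg (gauge_nonneg _)]

/-- Let `V` be a metrizable locally convex real topological vector space.  If the dual
`V* = V →L[ℝ] ℝ`, equipped with the strong topology of uniform convergence on von
Neumann bounded subsets of `V` (Mathlib's canonical topology on `V →L[ℝ] ℝ`), is
metrizable, then `V` is normable: there is a norm on `V` (formalized as a
point-separating seminorm) whose open balls around `0` form a basis of the
neighborhood filter of `0`, i.e. the norm induces the topology of `V`. -/
theorem stmt7 (V : Type*)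
    [AddCommGroup V] [Module ℝ V] [TopologicalSpace V] [IsTopologicalAddGroup V]
    [ContinuousSMul ℝ V] [LocallyConvexSpace ℝ V] [TopologicalSpace.MetrizableSpace V]
    (hmetr : TopologicalSpace.MetrizableSpace (V →L[ℝ] ℝ)) :
    ∃ n : Seminorm ℝ V, (∀ x : V, n x = 0 → x = 0) ∧
      (nhds (0 : V)).HasBasis (fun ε : ℝ => 0 < ε) (fun ε => {x : V | n x < ε}) := by
  obtain ⟨U, hU, hb⟩ := exists_isVonNBounded_mem_nhds_zero_of_firstCountable (E := V)
  exact exists_seminorm_of_isVonNBounded_mem_nhds_zero hU hb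
end

section
/- For every sequence (a_n)_{n∈ℕ} of real numbers there exists a smooth function f ∈ C^∞([0,1],ℝ) such that for every n ∈ ℕ the n-th derivative of f at the point 1 − 2^{-n} equals a_n, i.e., f^{(n)}(1 − 2^{-n}) = a_n for all n ≥ 0. -/
/-!
Borel's construction: with a bump `χ` equal to `1` near `0`, put
`f x = ∑ₙ aₙ / n! · χ ((x - cₙ) / δₙ) · (x - cₙ)ⁿ`. Near `cₙ` the `n`-th term is the monomial
`aₙ / n! · (x - cₙ)ⁿ`, whose `n`-th derivative at `cₙ` is `aₙ`, and its derivatives of order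
`k < n` are `O(δₙ^(n-k))`; choosing `δₙ` small makes them at most `2⁻ⁿ`, so the series converges
in every `Cᵏ`. If moreover `δₙ` is below the radius of pairwise disjoint balls around the points
`cₙ = 1 - 2⁻ⁿ`, only the `n`-th term is nonzero near `cₙ`.
-/

open Set Metric Filter Function
open scoped Nat Topology ContDiff

section IteratedDeriv

variable {𝕜 : Type*} [NontriviallyNormedField 𝕜] {F : Type*} [NormedAddCommGroup F]
  [NormedSpace 𝕜 F]

lemma iteratedDeriv_comp_mul_sub {k : ℕ} {g : 𝕜 → 𝕜} (hg : ContDiff 𝕜 k g) (a c x : 𝕜) :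
    iteratedDeriv k (fun x => g (a * (x - c))) x = a ^ k * iteratedDeriv k g (a * (x - c)) := by
  rw [iteratedDeriv_comp_sub_const k (fun y => g (a * y)) c, iteratedDeriv_comp_const_mul hg]

lemma iteratedDeriv_sub_pow_self (n : ℕ) (c : 𝕜) :
    iteratedDeriv n (fun x => (x - c) ^ n) c = n ! := by
  simp [iteratedDeriv_comp_sub_const n (· ^ n) c, Nat.descFactorial_self]

lemma HasCompactSupport.exists_bound_iteratedDeriv {g : 𝕜 → F} (hc : HasCompactSupport g)
    (hg : ContDiff 𝕜 ∞ g) (n : ℕ) : ∃ C, ∀ k < n, ∀ x, ‖iteratedDeriv k g x‖ ≤ C := by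
  have hk (k : ℕ) : ∀ᶠ C in atTop, ∀ x, ‖iteratedDeriv k g x‖ ≤ C := by
    obtain ⟨C, hC⟩ := (hg.continuous_iteratedFDeriv (mod_cast le_top))
      |>.bounded_above_of_compact_support (hc.iteratedFDeriv (𝕜 := 𝕜) k)
    filter_upwards [eventually_ge_atTop C] with C' hC' x
    rw [← norm_iteratedFDeriv_eq_norm_iteratedDeriv]
    exact (hC x).trans hC'
  exact ((eventually_all_finite (finite_Iio n)).2 fun k _ => hk k).exists

end IteratedDeriv

lemma tsum_eq_of_mem_of_support_subset {ι α M : Type*} [AddCommMonoid M] [TopologicalSpace M]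
    {F : ι → α → M} {U : ι → Set α} (hU : Pairwise (Disjoint on U))
    (hF : ∀ i, support (F i) ⊆ U i) {i : ι} {x : α} (hx : x ∈ U i) :
    ∑' j, F j x = F i x :=
  tsum_eq_single i fun j hj => notMem_support.1 fun h => (hU hj).ne_of_mem (hF j h) hx rfl

lemma pairwise_disjoint_ball_one_sub_pow :
    Pairwise (Disjoint on fun n : ℕ => ball (1 - 2⁻¹ ^ n : ℝ) (2⁻¹ ^ (n + 2))) := by
  refine (pairwise_disjoint_on _).2 fun m n hmn => ball_disjoint_ball ?_
  have hn : (2⁻¹ : ℝ) ^ n ≤ 2⁻¹ ^ m * 2⁻¹ := by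
    rw [← pow_succ]; exact pow_le_pow_of_le_one (by norm_num) (by norm_num) hmn
  have hm : (0 : ℝ) < 2⁻¹ ^ m := by positivity
  rw [Real.dist_eq, abs_of_neg (by linarith), pow_add, pow_add]
  linarith

section BumpMonomial

variable (χ : ContDiffBump (0 : ℝ))

noncomputable def bumpMonomial (c δ : ℝ) (n : ℕ) (x : ℝ) : ℝ :=
  χ (δ⁻¹ * (x - c)) * (x - c) ^ n

variable {χ} {c δ x : ℝ} {n : ℕ}

lemma contDiff_bumpMonomial (c δ : ℝ) (n : ℕ) : ContDiff ℝ ∞ (bumpMonomial χ c δ n) :=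
  (χ.contDiff.comp (contDiff_const.mul (contDiff_id.sub contDiff_const))).mul
    ((contDiff_id.sub contDiff_const).pow n)

lemma bumpMonomial_eq_pow (hδ : 0 < δ) (hx : |x - c| ≤ χ.rIn * δ) :
    bumpMonomial χ c δ n x = (x - c) ^ n := by
  rw [bumpMonomial, χ.one_of_mem_closedBall, one_mul]
  rw [mem_closedBall, dist_zero_right, norm_mul, norm_inv, Real.norm_of_nonneg hδ.le,
    Real.norm_eq_abs, inv_mul_le_iff₀ hδ]
  linarith

lemma support_bumpMonomial_subset (hδ : 0 < δ) :
    support (bumpMonomial χ c δ n) ⊆ ball c (χ.rOut * δ) := by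
  refine (support_mul_subset_left _ _).trans fun x hx => ?_
  rw [mem_support, ← mem_support, χ.support_eq, mem_ball, dist_zero_right, norm_mul, norm_inv,
    Real.norm_of_nonneg hδ.le, inv_mul_lt_iff₀ hδ] at hx
  rwa [mem_ball, dist_eq_norm, mul_comm]

lemma bumpMonomial_eq_pow_mul_comp (hδ : δ ≠ 0) (c : ℝ) (n : ℕ) :
    bumpMonomial χ c δ n = fun x => δ ^ n * (fun y => χ y * y ^ n) (δ⁻¹ * (x - c)) := by
  ext x
  simp only [bumpMonomial, mul_pow, inv_pow]
  field_simp

variable (χ) in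
lemma exists_norm_iteratedDeriv_bumpMonomial_le (n : ℕ) : ∃ C, ∀ c δ, 0 < δ → δ ≤ 1 →
    ∀ k < n, ∀ x, ‖iteratedDeriv k (bumpMonomial χ c δ n) x‖ ≤ C * δ := by
  have hg : ContDiff ℝ ∞ fun y => χ y * y ^ n := χ.contDiff.mul (contDiff_id.pow n)
  obtain ⟨C, hC⟩ := χ.hasCompactSupport.mul_right.exists_bound_iteratedDeriv hg n
  refine ⟨C, fun c δ hδ hδ1 k hk x => ?_⟩
  have hpow : δ ^ n * δ⁻¹ ^ k = δ ^ (n - k) := by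
    rw [pow_sub₀ _ hδ.ne' hk.le, inv_pow]
  rw [bumpMonomial_eq_pow_mul_comp hδ.ne', iteratedDeriv_const_mul_field,
    iteratedDeriv_comp_mul_sub (hg.of_le (mod_cast le_top)), ← mul_assoc, hpow, norm_mul,
    Real.norm_of_nonneg (by positivity), mul_comm C]
  exact mul_le_mul (pow_le_of_le_one hδ.le hδ1 (by omega)) (hC k hk _) (norm_nonneg _) hδ.le

variable (χ) in
lemma exists_bumpMonomial_norm_iteratedDeriv_le (n : ℕ) (b : ℝ) {ε r : ℝ} (hε : 0 < ε)
    (hr : 0 < r) : ∃ δ, 0 < δ ∧ δ ≤ r ∧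
      ∀ c, ∀ k < n, ∀ x, ‖iteratedDeriv k (fun y => b * bumpMonomial χ c δ n y) x‖ ≤ ε := by
  obtain ⟨C, hC⟩ := exists_norm_iteratedDeriv_bumpMonomial_le χ n
  have hsmall : ∀ᶠ δ in 𝓝 (0 : ℝ), δ < 1 ∧ δ < r ∧ ‖b‖ * (C * δ) < ε :=
    (eventually_lt_nhds one_pos).and <| (eventually_lt_nhds hr).and <|
      (show ContinuousAt (fun δ : ℝ => ‖b‖ * (C * δ)) 0 by fun_prop).eventually_lt
        continuousAt_const (by simpa using hε)
  obtain ⟨δ, ⟨hδ1, hδr, hδε⟩, hδ⟩ :=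
    ((hsmall.filter_mono nhdsWithin_le_nhds).and (self_mem_nhdsWithin (s := Ioi 0))).exists
  refine ⟨δ, hδ, hδr.le, fun c k hk x => ?_⟩
  rw [iteratedDeriv_const_mul_field, norm_mul]
  exact (mul_le_mul_of_nonneg_left (hC c δ hδ hδ1.le k hk x) (norm_nonneg b)).trans hδε.le

end BumpMonomial

theorem exists_contDiff_iteratedDeriv_eq {c r : ℕ → ℝ} (hr : ∀ n, 0 < r n)
    (hdisj : Pairwise (Disjoint on fun n => ball (c n) (r n))) (a : ℕ → ℝ) :
    ∃ f : ℝ → ℝ, ContDiff ℝ ∞ f ∧ ∀ n, iteratedDeriv n f (c n) = a n := by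
  let χ : ContDiffBump (0 : ℝ) := ⟨2⁻¹, 1, by norm_num, by norm_num⟩
  have hq : (0 : ℝ) < 2⁻¹ := by norm_num
  choose δ hδ hδr hδε using fun n =>
    exists_bumpMonomial_norm_iteratedDeriv_le χ n (a n / n !) (pow_pos hq n) (hr n)
  set F : ℕ → ℝ → ℝ := fun n x => a n / n ! * bumpMonomial χ (c n) (δ n) n x
  have hsupp (n : ℕ) : support (F n) ⊆ ball (c n) (r n) :=
    (support_mul_subset_right _ _).trans <| (support_bumpMonomial_subset (hδ n)).trans <|
      ball_subset_ball <| (one_mul (δ n)).trans_le (hδr n)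
  refine ⟨fun x => ∑' n, F n x, ?_, fun n => ?_⟩
  · refine contDiff_tsum_of_eventually (v := fun _ n => 2⁻¹ ^ n)
      (fun n => contDiff_const.mul (contDiff_bumpMonomial _ _ _))
      (fun _ _ => summable_geometric_of_lt_one hq.le (by norm_num)) fun k _ => ?_
    rw [Nat.cofinite_eq_atTop]
    filter_upwards [eventually_gt_atTop k] with n hkn x
    rw [norm_iteratedFDeriv_eq_norm_iteratedDeriv]
    exact hδε n (c n) k hkn x
  have hloc : (fun x => ∑' m, F m x) =ᶠ[𝓝 (c n)] fun x => a n / n ! * (x - c n) ^ n := by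
    filter_upwards [ball_mem_nhds (c n) (mul_pos hq (hδ n))] with x hx
    have hx_near : |x - c n| ≤ χ.rIn * δ n := by
      rw [mem_ball, Real.dist_eq] at hx
      exact hx.le
    have hx_ball : x ∈ ball (c n) (r n) :=
      ball_subset_ball (by linarith [hδ n, hδr n]) hx
    rw [tsum_eq_of_mem_of_support_subset hdisj hsupp hx_ball]
    exact congrArg _ (bumpMonomial_eq_pow (hδ n) hx_near)
  rw [hloc.iteratedDeriv_eq, iteratedDeriv_const_mul_field, iteratedDeriv_sub_pow_self]
  field_simp

/-- For every sequence `(a n)` of real numbers there is a smooth function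
`f ∈ C^∞([0,1],ℝ)` with `f⁽ⁿ⁾(1 - 2⁻ⁿ) = a n` for all `n ≥ 0`, where derivatives are
taken within `[0,1]`. -/
theorem stmt10 (a : ℕ → ℝ) :
    ∃ f : ℝ → ℝ, ContDiffOn ℝ (⊤ : ℕ∞) f (Set.Icc (0:ℝ) 1) ∧
      ∀ n : ℕ, iteratedDerivWithin n f (Set.Icc (0:ℝ) 1) (1 - 2⁻¹ ^ n) = a n := by
  have hq : (0 : ℝ) < 2⁻¹ := by norm_num
  obtain ⟨f, hf, hfa⟩ := exists_contDiff_iteratedDeriv_eq (fun n => pow_pos hq (n + 2))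
    pairwise_disjoint_ball_one_sub_pow a
  refine ⟨f, hf.contDiffOn, fun n => ?_⟩
  have hmem : 1 - 2⁻¹ ^ n ∈ Icc (0 : ℝ) 1 :=
    ⟨sub_nonneg.2 (pow_le_one₀ hq.le (by norm_num)), sub_le_self _ (pow_pos hq n).le⟩
  rw [iteratedDerivWithin_eq_iteratedDeriv (uniqueDiffOn_Icc zero_lt_one)
    (hf.of_le (mod_cast le_top)).contDiffAt hmem, hfa]
end

section
/- Let V = ℝ^ℕ carry the product topology and let V* be its topological dual space. There is no metrizable vector space topology on V* that is finer than (i.e., contains) the weak-* topology of pointwise convergence on V. -/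
/-!
In a first-countable topological vector space over `ℝ`, any sequence of vectors
can be shrunk by nonzero scalars to a null sequence. Applied to the coordinate functionals
`e n` of `ℝ^ℕ`, this gives `c n • e n → 0` with every `c n ≠ 0`. If the topology is finer
than the weak-* topology, `c n • e n` then tends to `0` pointwise, yet at the single point
`x = (c k⁻¹)ₖ` of `ℝ^ℕ` it takes the constant value `1`.
-/

open Filter Topology

theorem exists_ne_zero_smul_tendsto_zero {𝕜 X : Type*} [NontriviallyNormedField 𝕜]
    [TopologicalSpace X] [Zero X] [SMulWithZero 𝕜 X] [ContinuousSMul 𝕜 X]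
    [(𝓝 (0 : X)).IsCountablyGenerated] (v : ℕ → X) :
    ∃ c : ℕ → 𝕜, (∀ n, c n ≠ 0) ∧ Tendsto (fun n => c n • v n) atTop (𝓝 0) := by
  obtain ⟨U, hU⟩ := (𝓝 (0 : X)).exists_antitone_basis
  have hsmall : ∀ n, ∃ d : 𝕜, d ≠ 0 ∧ d • v n ∈ U n := by
    intro n
    have hlim : Tendsto (fun d : 𝕜 => d • v n) (𝓝[≠] 0) (𝓝 0) :=
      ((continuous_id.smul continuous_const).tendsto' 0 0 (zero_smul 𝕜 (v n))).mono_left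
        nhdsWithin_le_nhds
    obtain ⟨d, hdU, hd0⟩ :=
      ((hlim.eventually_mem (hU.mem n)).and self_mem_nhdsWithin).exists
    exact ⟨d, hd0, hdU⟩
  choose c hc0 hcU using hsmall
  exact ⟨c, hc0, hU.tendsto hcU⟩

theorem continuous_apply_of_le_induced {F α β : Type*} [TopologicalSpace β]
    {t : TopologicalSpace F} {φ : F → α → β}
    (hle : t ≤ TopologicalSpace.induced φ Pi.topologicalSpace) (x : α) :
    Continuous[t, _] (fun f => φ f x) :=
  continuous_iff_le_induced.2 <|
    hle.trans ((induced_mono (continuous_apply x).le_induced).trans_eq induced_compose)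

/-- Let `V = ℝ^ℕ` with the product topology and `V*` its topological dual.  There is no
metrizable vector space topology on `V*` that is finer than (i.e. contains) the weak-*
topology of pointwise convergence.  (In Mathlib's order on topologies, `t ≤ s` means
`t` is finer than `s`; the weak-* topology is the topology induced by the inclusion of
`V*` into `V → ℝ` with the product topology.) -/
theorem stmt11 :
    ¬ ∃ t : TopologicalSpace ((ℕ → ℝ) →L[ℝ] ℝ),
      @IsTopologicalAddGroup ((ℕ → ℝ) →L[ℝ] ℝ) t _ ∧
      @ContinuousSMul ℝ ((ℕ → ℝ) →L[ℝ] ℝ) _ _ t ∧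
      @TopologicalSpace.MetrizableSpace ((ℕ → ℝ) →L[ℝ] ℝ) t ∧
      t ≤ TopologicalSpace.induced
        (fun (f : (ℕ → ℝ) →L[ℝ] ℝ) (x : ℕ → ℝ) => f x) Pi.topologicalSpace := by
  rintro ⟨t, -, hsmul, hmetr, hle⟩
  let e : ℕ → (ℕ → ℝ) →L[ℝ] ℝ := fun n => ContinuousLinearMap.proj n
  obtain ⟨c, hc0, hc⟩ := exists_ne_zero_smul_tendsto_zero (𝕜 := ℝ) e
  have hval : ∀ n, (c n • e n) (fun k => (c k)⁻¹) = 1 := fun n =>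
    mul_inv_cancel₀ (hc0 n)
  have hlim := ((continuous_apply_of_le_induced hle fun k => (c k)⁻¹).tendsto 0).comp hc
  simp only [Function.comp_def, hval, zero_apply] at hlim
  exact one_ne_zero (tendsto_nhds_unique tendsto_const_nhds hlim)
end

section
/- Let V be a real vector space with an increasing sequence of seminorms (μ_n)_{n∈ℕ} generating its topology, and let W be a complete Hausdorff real topological vector space whose topology is generated by an increasing, point-separating sequence of seminorms (ν_n)_{n∈ℕ}. Fix r, b ∈ ℕ and let T_{r,b}L(V,W) be the space of continuous linear maps f : V → W such that ‖f‖_n := sup{ν_n(f(v)) : v ∈ V, μ_{n+r}(v) ≤ 1} is finite for every n ≥ b. Then T_{r,b}L(V,W), equipped with the translation-invariant metric D(f,g) := Σ_{n≥b} 2^{-n}·min(1, ‖f−g‖_n), is a complete metric space. -/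
/-!
A map in `T_{r,b}L(V,W)` satisfies `ν n (f v) ≤ ‖f‖_n μ (n+r) v`, and `D(f_k, f) → 0` exactly
when `‖f_k - f‖_n → 0` for every `n ≥ b` (dominated convergence against `2⁻ⁿ`). So a `D`-Cauchy
sequence `u` is Cauchy in each `‖·‖_n`, hence, by monotonicity of `ν`, pointwise Cauchy in `W`;
let `L` be its pointwise limit, which is linear. Letting `k → ∞` in `ν n (u m v - u k v) ≤ ε` on
the `μ (n+r)`-unit ball gives `‖u m - L‖_n → 0`; together with the bounds on `u m` this bounds
`L` on these balls, which makes `L` continuous and tame.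
-/

/-- The set of values `ν n (f v)` for `v` in the unit ball of the seminorm `μ (n+r)`;
its supremum is the operator "norm" `‖f‖_n` of a tame linear map. -/
def tameNormSet {V W : Type*} [AddCommGroup V] [Module ℝ V] [TopologicalSpace V]
    [AddCommGroup W] [Module ℝ W] [TopologicalSpace W]
    (μ : SeminormFamily ℝ V ℕ) (ν : SeminormFamily ℝ W ℕ) (r : ℕ)
    (f : V →L[ℝ] W) (n : ℕ) : Set ℝ :=
  (fun v => ν n (f v)) '' {v : V | μ (n + r) v ≤ 1}

/-- `‖f‖_n = sup {ν n (f v) | μ (n+r) v ≤ 1}`. -/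
noncomputable def tameOpNorm {V W : Type*} [AddCommGroup V] [Module ℝ V]
    [TopologicalSpace V] [AddCommGroup W] [Module ℝ W] [TopologicalSpace W]
    (μ : SeminormFamily ℝ V ℕ) (ν : SeminormFamily ℝ W ℕ) (r : ℕ)
    (f : V →L[ℝ] W) (n : ℕ) : ℝ :=
  sSup (tameNormSet μ ν r f n)

/-- `T_{r,b}L(V,W)`: the continuous linear maps `f : V → W` with `‖f‖_n < ∞`
(i.e. the relevant set of values is bounded above) for all `n ≥ b`. -/
def TameLinearMaps {V W : Type*} [AddCommGroup V] [Module ℝ V] [TopologicalSpace V]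
    [AddCommGroup W] [Module ℝ W] [TopologicalSpace W]
    (μ : SeminormFamily ℝ V ℕ) (ν : SeminormFamily ℝ W ℕ) (r b : ℕ) : Type _ :=
  {f : V →L[ℝ] W // ∀ n, b ≤ n → BddAbove (tameNormSet μ ν r f n)}

/-- The translation-invariant metric `D(f,g) = Σ_{n ≥ b} 2⁻ⁿ min(1, ‖f - g‖_n)`
on `T_{r,b}L(V,W)`. -/
noncomputable def tameMetric {V W : Type*} [AddCommGroup V] [Module ℝ V]
    [TopologicalSpace V] [AddCommGroup W] [Module ℝ W] [TopologicalSpace W]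
    [IsTopologicalAddGroup W]
    (μ : SeminormFamily ℝ V ℕ) (ν : SeminormFamily ℝ W ℕ) (r b : ℕ)
    (f g : TameLinearMaps μ ν r b) : ℝ :=
  ∑' n : ℕ, if b ≤ n then 2⁻¹ ^ n * min 1 (tameOpNorm μ ν r (f.1 - g.1) n) else 0

open Filter Topology

theorem Seminorm.le_mul_of_forall_le_one {E : Type*} [AddCommGroup E] [Module ℝ E]
    {p q : Seminorm ℝ E} {C : ℝ} (h : ∀ x, p x ≤ 1 → q x ≤ C) (x : E) : q x ≤ C * p x := by
  refine ge_of_tendsto (x := 𝓝[>] p x)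
    ((continuous_const_mul C).tendsto (p x) |>.mono_left nhdsWithin_le_nhds)
    (eventually_nhdsWithin_of_forall fun t ht => ?_)
  replace ht : p x < t := ht
  have ht₀ : 0 < t := (apply_nonneg p x).trans_lt ht
  have hscaled := h (t⁻¹ • x) (by
    rw [map_smul_eq_mul, Real.norm_of_nonneg (inv_nonneg.2 ht₀.le), inv_mul_le_iff₀ ht₀]
    linarith)
  rwa [map_smul_eq_mul, Real.norm_of_nonneg (inv_nonneg.2 ht₀.le), inv_mul_le_iff₀ ht₀,
    mul_comm] at hscaled

section TameOpNorm

variable {V W : Type*} [AddCommGroup V] [Module ℝ V] [TopologicalSpace V]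
    [AddCommGroup W] [Module ℝ W] [TopologicalSpace W]
    {μ : SeminormFamily ℝ V ℕ} {ν : SeminormFamily ℝ W ℕ} {r : ℕ} {f g : V →L[ℝ] W} {n : ℕ}

theorem tameOpNorm_nonneg (μ : SeminormFamily ℝ V ℕ) (ν : SeminormFamily ℝ W ℕ) (r : ℕ)
    (f : V →L[ℝ] W) (n : ℕ) : 0 ≤ tameOpNorm μ ν r f n :=
  Real.sSup_nonneg (by rintro _ ⟨v, -, rfl⟩; exact apply_nonneg _ _)

theorem le_tameOpNorm (hf : BddAbove (tameNormSet μ ν r f n)) {v : V} (hv : μ (n + r) v ≤ 1) :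
    ν n (f v) ≤ tameOpNorm μ ν r f n :=
  le_csSup hf ⟨v, hv, rfl⟩

theorem tameOpNorm_le {C : ℝ} (hC : 0 ≤ C) (h : ∀ v, μ (n + r) v ≤ 1 → ν n (f v) ≤ C) :
    tameOpNorm μ ν r f n ≤ C :=
  Real.sSup_le (by rintro _ ⟨v, hv, rfl⟩; exact h v hv) hC

theorem apply_le_tameOpNorm_mul (hf : BddAbove (tameNormSet μ ν r f n)) (v : V) :
    ν n (f v) ≤ tameOpNorm μ ν r f n * μ (n + r) v :=
  Seminorm.le_mul_of_forall_le_one (q := (ν n).comp (f : V →ₗ[ℝ] W))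
    (fun _ hw => le_tameOpNorm hf hw) v

theorem tameOpNorm_zero : tameOpNorm μ ν r (0 : V →L[ℝ] W) n = 0 :=
  le_antisymm (tameOpNorm_le le_rfl fun v _ => by simp) (tameOpNorm_nonneg μ ν r 0 n)

theorem eq_zero_of_tameOpNorm_eq_zero {b : ℕ} (hνmono : Monotone ν)
    (hνsep : ∀ w : W, (∀ n, ν n w = 0) → w = 0)
    (hf : ∀ n, b ≤ n → BddAbove (tameNormSet μ ν r f n))
    (h : ∀ n, b ≤ n → tameOpNorm μ ν r f n = 0) : f = 0 := by
  ext v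
  refine hνsep _ fun i => le_antisymm ?_ (apply_nonneg _ _)
  calc ν i (f v) ≤ ν (max i b) (f v) := hνmono (le_max_left i b) _
    _ ≤ tameOpNorm μ ν r f (max i b) * μ (max i b + r) v :=
      apply_le_tameOpNorm_mul (hf _ (le_max_right i b)) v
    _ = 0 := by rw [h _ (le_max_right i b), zero_mul]

variable [IsTopologicalAddGroup W]

theorem tameOpNorm_sub_comm (f g : V →L[ℝ] W) (n : ℕ) :
    tameOpNorm μ ν r (f - g) n = tameOpNorm μ ν r (g - f) n := by
  simp only [tameOpNorm, tameNormSet, sub_apply, map_sub_rev]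

theorem bddAbove_tameNormSet_sub (hf : BddAbove (tameNormSet μ ν r f n))
    (hg : BddAbove (tameNormSet μ ν r g n)) : BddAbove (tameNormSet μ ν r (f - g) n) :=
  ⟨tameOpNorm μ ν r f n + tameOpNorm μ ν r g n, Set.forall_mem_image.2 fun v hv =>
    (map_sub_le_add (ν n) (f v) (g v)).trans
      (add_le_add (le_tameOpNorm hf hv) (le_tameOpNorm hg hv))⟩

theorem tameOpNorm_add_le (hf : BddAbove (tameNormSet μ ν r f n))
    (hg : BddAbove (tameNormSet μ ν r g n)) :
    tameOpNorm μ ν r (f + g) n ≤ tameOpNorm μ ν r f n + tameOpNorm μ ν r g n :=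
  tameOpNorm_le (add_nonneg (tameOpNorm_nonneg μ ν r f n) (tameOpNorm_nonneg μ ν r g n))
    fun _ hv => (map_add_le_add (ν n) _ _).trans
      (add_le_add (le_tameOpNorm hf hv) (le_tameOpNorm hg hv))

end TameOpNorm

section FrechetSum

noncomputable def frechetTerm (b : ℕ) (a : ℕ → ℝ) (n : ℕ) : ℝ :=
  if b ≤ n then 2⁻¹ ^ n * min 1 (a n) else 0

noncomputable def frechetSum (b : ℕ) (a : ℕ → ℝ) : ℝ :=
  ∑' n, frechetTerm b a n

variable {b : ℕ} {a c d : ℕ → ℝ}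

theorem frechetTerm_nonneg (ha : ∀ n, 0 ≤ a n) (n : ℕ) : 0 ≤ frechetTerm b a n := by
  unfold frechetTerm
  split_ifs
  · exact mul_nonneg (by positivity) (le_min zero_le_one (ha n))
  · exact le_rfl

theorem frechetTerm_le (b : ℕ) (a : ℕ → ℝ) (n : ℕ) : frechetTerm b a n ≤ 2⁻¹ ^ n := by
  unfold frechetTerm
  split_ifs
  · exact mul_le_of_le_one_right (by positivity) (min_le_left _ _)
  · positivity

theorem summable_frechetTerm (ha : ∀ n, 0 ≤ a n) : Summable (frechetTerm b a) :=
  .of_nonneg_of_le (frechetTerm_nonneg ha) (frechetTerm_le b a)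
    (summable_geometric_of_lt_one (by norm_num) (by norm_num))

theorem frechetSum_nonneg (ha : ∀ n, 0 ≤ a n) : 0 ≤ frechetSum b a :=
  tsum_nonneg (frechetTerm_nonneg ha)

theorem frechetTerm_le_frechetSum (ha : ∀ n, 0 ≤ a n) (n : ℕ) :
    frechetTerm b a n ≤ frechetSum b a :=
  (summable_frechetTerm ha).le_tsum n fun m _ => frechetTerm_nonneg ha m

theorem frechetSum_eq_zero_iff (ha : ∀ n, 0 ≤ a n) :
    frechetSum b a = 0 ↔ ∀ n, b ≤ n → a n = 0 := by
  rw [frechetSum, ← (summable_frechetTerm ha).hasSum_iff,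
    hasSum_zero_iff_of_nonneg (frechetTerm_nonneg ha), funext_iff]
  refine forall_congr' fun n => ?_
  by_cases hn : b ≤ n
  · have hmin : min 1 (a n) = 0 ↔ a n = 0 := by
      rcases le_total 1 (a n) with h | h
      · simp only [min_eq_left h, one_ne_zero, false_iff]; linarith
      · rw [min_eq_right h]
    simp [frechetTerm, hn, hmin]
  · simp [frechetTerm, hn]

theorem frechetSum_le_add (ha : ∀ n, 0 ≤ a n) (hc : ∀ n, 0 ≤ c n) (hd : ∀ n, 0 ≤ d n)
    (h : ∀ n, b ≤ n → a n ≤ c n + d n) : frechetSum b a ≤ frechetSum b c + frechetSum b d := by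
  rw [frechetSum, frechetSum, frechetSum,
    ← (summable_frechetTerm hc).tsum_add (summable_frechetTerm hd)]
  refine (summable_frechetTerm ha).tsum_le_tsum (fun n => ?_)
    ((summable_frechetTerm hc).add (summable_frechetTerm hd))
  unfold frechetTerm
  split_ifs with hn
  · rw [← mul_add]
    gcongr
    simp only [min_def]
    split_ifs <;> linarith [h n hn, hc n, hd n]
  · simp

theorem tendsto_frechetSum_zero_iff {ι : Type*} {l : Filter ι} {a : ι → ℕ → ℝ}
    (ha : ∀ i n, 0 ≤ a i n) :
    Tendsto (fun i => frechetSum b (a i)) l (𝓝 0) ↔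
      ∀ n, b ≤ n → Tendsto (fun i => a i n) l (𝓝 0) := by
  constructor
  · intro h n hn
    have hterm : Tendsto (fun i => 2⁻¹ ^ n * min 1 (a i n)) l (𝓝 0) :=
      squeeze_zero (fun i => by simpa [frechetTerm, hn] using frechetTerm_nonneg (b := b) (ha i) n)
        (fun i => by simpa [frechetTerm, hn] using frechetTerm_le_frechetSum (b := b) (ha i) n) h
    have hmin : Tendsto (fun i => min 1 (a i n)) l (𝓝 0) := by
      have := hterm.const_mul ((2 : ℝ) ^ n)
      rw [mul_zero] at this
      exact this.congr fun i => by rw [← mul_assoc, ← mul_pow]; norm_num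
    refine hmin.congr' ((hmin.eventually (eventually_lt_nhds one_pos)).mono fun i hi => ?_)
    exact min_eq_right (min_lt_iff.1 hi |>.resolve_left (lt_irrefl 1)).le
  · intro h
    have hlim : Tendsto (fun i => frechetSum b (a i)) l (𝓝 (∑' _ : ℕ, (0 : ℝ))) := by
      refine tendsto_tsum_of_dominated_convergence (bound := fun n => 2⁻¹ ^ n)
        (summable_geometric_of_lt_one (by norm_num) (by norm_num)) (fun n => ?_)
        (.of_forall fun i n => ?_)
      · unfold frechetTerm
        split_ifs with hn
        · have hcont : Continuous fun x : ℝ => 2⁻¹ ^ n * min 1 x := by fun_prop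
          simpa [Function.comp_def] using (hcont.tendsto 0).comp (h n hn)
        · exact tendsto_const_nhds
      · rw [Real.norm_of_nonneg (frechetTerm_nonneg (ha i) n)]
        exact frechetTerm_le b (a i) n
    rwa [tsum_zero] at hlim

end FrechetSum

section Completeness

variable {V W : Type*} [AddCommGroup V] [Module ℝ V] [TopologicalSpace V]
    [AddCommGroup W] [Module ℝ W]
    {μ : SeminormFamily ℝ V ℕ} {ν : SeminormFamily ℝ W ℕ} {r b : ℕ}

theorem continuous_of_forall_le_one_bound [TopologicalSpace W] (hμ : WithSeminorms μ)
    (hν : WithSeminorms ν) (hνmono : Monotone ν) (L : V →ₗ[ℝ] W)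
    (hL : ∀ n, b ≤ n → ∃ C, ∀ v, μ (n + r) v ≤ 1 → ν n (L v) ≤ C) : Continuous L := by
  refine hμ.continuous_of_isBounded hν L (Seminorm.IsBounded.of_real fun i => ?_)
  obtain ⟨C, hC⟩ := hL (max i b) (le_max_right i b)
  refine ⟨{max i b + r}, C, fun v => ?_⟩
  rw [Finset.sup_singleton]
  exact (hνmono (le_max_left i b) (L v)).trans
    (Seminorm.le_mul_of_forall_le_one (q := (ν (max i b)).comp L) hC v)

theorem tendsto_apply_of_tendsto_tameOpNorm [TopologicalSpace W] (hν : WithSeminorms ν)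
    (hνmono : Monotone ν) {ι : Type*} {l : Filter ι} (F : ι → V →L[ℝ] W)
    (hF : ∀ i n, b ≤ n → BddAbove (tameNormSet μ ν r (F i) n))
    (h : ∀ n, b ≤ n → Tendsto (fun i => tameOpNorm μ ν r (F i) n) l (𝓝 0)) (v : V) :
    Tendsto (fun i => F i v) l (𝓝 0) := by
  refine (hν.tendsto_nhds _ 0).2 fun i ε hε => ?_
  have hn : b ≤ max i b := le_max_right i b
  have hbound :
      Tendsto (fun j => tameOpNorm μ ν r (F j) (max i b) * μ (max i b + r) v) l (𝓝 0) := by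
    simpa using (h _ hn).mul_const (μ (max i b + r) v)
  have hνi : Tendsto (fun j => ν i (F j v)) l (𝓝 0) :=
    squeeze_zero (fun _ => apply_nonneg _ _)
      (fun j => (hνmono (le_max_left i b) _).trans (apply_le_tameOpNorm_mul (hF j _ hn) v)) hbound
  simpa using hνi.eventually (eventually_lt_nhds hε)

variable [UniformSpace W] [IsUniformAddGroup W]

theorem cauchySeq_apply_of_tendsto_tameOpNorm (hν : WithSeminorms ν) (hνmono : Monotone ν)
    (u : ℕ → V →L[ℝ] W) (hu : ∀ k n, b ≤ n → BddAbove (tameNormSet μ ν r (u k) n))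
    (hcauchy : ∀ n, b ≤ n →
      Tendsto (fun p : ℕ × ℕ => tameOpNorm μ ν r (u p.1 - u p.2) n) atTop (𝓝 0)) (v : V) :
    CauchySeq fun k => u k v := by
  rw [cauchySeq_iff_tendsto, uniformity_eq_comap_nhds_zero, tendsto_comap_iff]
  exact tendsto_apply_of_tendsto_tameOpNorm hν hνmono (fun p : ℕ × ℕ => u p.2 - u p.1)
    (fun p n hn => bddAbove_tameNormSet_sub (hu p.2 n hn) (hu p.1 n hn))
    (fun n hn => (hcauchy n hn).congr fun p => tameOpNorm_sub_comm _ _ n) v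

theorem eventually_forall_apply_sub_le (hν : WithSeminorms ν) (u : ℕ → V →L[ℝ] W)
    (hu : ∀ k n, b ≤ n → BddAbove (tameNormSet μ ν r (u k) n))
    (hcauchy : ∀ n, b ≤ n →
      Tendsto (fun p : ℕ × ℕ => tameOpNorm μ ν r (u p.1 - u p.2) n) atTop (𝓝 0))
    {g : V → W} (hg : ∀ v, Tendsto (fun k => u k v) atTop (𝓝 (g v)))
    {n : ℕ} (hn : b ≤ n) {ε : ℝ} (hε : 0 < ε) :
    ∀ᶠ m in atTop, ∀ v, μ (n + r) v ≤ 1 → ν n (u m v - g v) ≤ ε := by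
  have hsmall := (hcauchy n hn).eventually (eventually_lt_nhds hε)
  rw [← prod_atTop_atTop_eq] at hsmall
  filter_upwards [hsmall.curry] with m hm v hv
  refine le_of_tendsto (((hν.continuous_seminorm n).tendsto _).comp
    (tendsto_const_nhds.sub (hg v))) (hm.mono fun k hk => ?_)
  exact (le_tameOpNorm (bddAbove_tameNormSet_sub (hu m n hn) (hu k n hn)) hv).trans hk.le

theorem exists_tendsto_tameOpNorm_sub [T2Space W] [CompleteSpace W]
    (hμ : WithSeminorms μ) (hν : WithSeminorms ν) (hνmono : Monotone ν)
    (u : ℕ → V →L[ℝ] W) (hu : ∀ k n, b ≤ n → BddAbove (tameNormSet μ ν r (u k) n))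
    (hcauchy : ∀ n, b ≤ n →
      Tendsto (fun p : ℕ × ℕ => tameOpNorm μ ν r (u p.1 - u p.2) n) atTop (𝓝 0)) :
    ∃ L : V →L[ℝ] W, (∀ n, b ≤ n → BddAbove (tameNormSet μ ν r L n)) ∧
      ∀ n, b ≤ n → Tendsto (fun k => tameOpNorm μ ν r (u k - L) n) atTop (𝓝 0) := by
  choose g hg using fun v =>
    cauchySeq_tendsto_of_complete (cauchySeq_apply_of_tendsto_tameOpNorm hν hνmono u hu hcauchy v)
  have := hν.continuousSMul
  let L₀ : V →ₗ[ℝ] W := linearMapOfTendsto g (fun k => (u k : V →ₗ[ℝ] W)) (tendsto_pi_nhds.2 hg)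
  have hclose := fun n (hn : b ≤ n) ε (hε : 0 < ε) =>
    eventually_forall_apply_sub_le hν u hu hcauchy hg hn hε
  have hbound : ∀ n, b ≤ n → ∃ C, ∀ v, μ (n + r) v ≤ 1 → ν n (L₀ v) ≤ C := by
    intro n hn
    obtain ⟨m, hm⟩ := (hclose n hn 1 one_pos).exists
    refine ⟨tameOpNorm μ ν r (u m) n + 1, fun v hv => ?_⟩
    calc ν n (g v) = ν n (u m v - (u m v - g v)) := by rw [sub_sub_cancel]
      _ ≤ ν n (u m v) + ν n (u m v - g v) := map_sub_le_add _ _ _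
      _ ≤ tameOpNorm μ ν r (u m) n + 1 := add_le_add (le_tameOpNorm (hu m n hn) hv) (hm v hv)
  let L : V →L[ℝ] W := ⟨L₀, continuous_of_forall_le_one_bound hμ hν hνmono L₀ hbound⟩
  refine ⟨L, fun n hn => ?_, fun n hn => ?_⟩
  · obtain ⟨C, hC⟩ := hbound n hn
    exact ⟨C, Set.forall_mem_image.2 hC⟩
  · refine tendsto_order.2 ⟨fun a ha => .of_forall fun k => ha.trans_le (tameOpNorm_nonneg ..),
      fun ε hε => (hclose n hn (ε / 2) (half_pos hε)).mono fun m hm => ?_⟩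
    exact (tameOpNorm_le (half_pos hε).le hm).trans_lt (half_lt_self hε)

end Completeness

section TameMetric

variable {V W : Type*} [AddCommGroup V] [Module ℝ V] [TopologicalSpace V]
    [AddCommGroup W] [Module ℝ W] [TopologicalSpace W] [IsTopologicalAddGroup W]
    {μ : SeminormFamily ℝ V ℕ} {ν : SeminormFamily ℝ W ℕ} {r b : ℕ}

theorem tameMetric_eq_frechetSum (f g : TameLinearMaps μ ν r b) :
    tameMetric μ ν r b f g = frechetSum b (tameOpNorm μ ν r (f.1 - g.1)) :=
  rfl

theorem tameMetric_nonneg (f g : TameLinearMaps μ ν r b) : 0 ≤ tameMetric μ ν r b f g :=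
  frechetSum_nonneg (tameOpNorm_nonneg μ ν r _)

theorem tameMetric_eq_zero_iff (hνmono : Monotone ν) (hνsep : ∀ w : W, (∀ n, ν n w = 0) → w = 0)
    (f g : TameLinearMaps μ ν r b) : tameMetric μ ν r b f g = 0 ↔ f = g := by
  rw [tameMetric_eq_frechetSum, frechetSum_eq_zero_iff (tameOpNorm_nonneg μ ν r _)]
  constructor
  · intro h
    exact Subtype.ext <| sub_eq_zero.1 <| eq_zero_of_tameOpNorm_eq_zero hνmono hνsep
      (fun n hn => bddAbove_tameNormSet_sub (f.2 n hn) (g.2 n hn)) h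
  · rintro rfl n -
    rw [sub_self, tameOpNorm_zero]

theorem tameMetric_comm (f g : TameLinearMaps μ ν r b) :
    tameMetric μ ν r b f g = tameMetric μ ν r b g f := by
  rw [tameMetric_eq_frechetSum, tameMetric_eq_frechetSum]
  congr 1
  exact funext fun n => tameOpNorm_sub_comm _ _ n

theorem tameMetric_triangle (f g h : TameLinearMaps μ ν r b) :
    tameMetric μ ν r b f h ≤ tameMetric μ ν r b f g + tameMetric μ ν r b g h := by
  refine frechetSum_le_add (tameOpNorm_nonneg μ ν r _) (tameOpNorm_nonneg μ ν r _)
    (tameOpNorm_nonneg μ ν r _) fun n hn => ?_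
  rw [← sub_add_sub_cancel f.1 g.1 h.1]
  exact tameOpNorm_add_le (bddAbove_tameNormSet_sub (f.2 n hn) (g.2 n hn))
    (bddAbove_tameNormSet_sub (g.2 n hn) (h.2 n hn))

end TameMetric

theorem stmt14_general (V W : Type*)
    [AddCommGroup V] [Module ℝ V] [TopologicalSpace V]
    [AddCommGroup W] [Module ℝ W] [UniformSpace W] [IsUniformAddGroup W]
    [CompleteSpace W]
    (μ : SeminormFamily ℝ V ℕ) (ν : SeminormFamily ℝ W ℕ)
    (hμtop : WithSeminorms μ) (hνtop : WithSeminorms ν)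
    (hνmono : ∀ (n : ℕ) (w : W), ν n w ≤ ν (n + 1) w)
    (hνsep : ∀ w : W, (∀ n, ν n w = 0) → w = 0)
    (r b : ℕ) :
    (∀ f g : TameLinearMaps μ ν r b, tameMetric μ ν r b f g = 0 ↔ f = g) ∧
    (∀ f g : TameLinearMaps μ ν r b, tameMetric μ ν r b f g = tameMetric μ ν r b g f) ∧
    (∀ f g h : TameLinearMaps μ ν r b,
      tameMetric μ ν r b f h ≤ tameMetric μ ν r b f g + tameMetric μ ν r b g h) ∧
    (∀ u : ℕ → TameLinearMaps μ ν r b,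
      (∀ ε : ℝ, 0 < ε → ∃ N, ∀ m, N ≤ m → ∀ n, N ≤ n →
        tameMetric μ ν r b (u m) (u n) < ε) →
      ∃ L : TameLinearMaps μ ν r b, ∀ ε : ℝ, 0 < ε → ∃ N, ∀ n, N ≤ n →
        tameMetric μ ν r b (u n) L < ε) := by
  have hν : Monotone ν := monotone_nat_of_le_succ hνmono
  have : T2Space W := by
    have := hνtop.T1_of_separating fun w hw => not_forall.1 (mt (hνsep w) hw)
    infer_instance
  refine ⟨tameMetric_eq_zero_iff hν hνsep, tameMetric_comm, tameMetric_triangle, fun u hu => ?_⟩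
  have hD : Tendsto (fun p : ℕ × ℕ => tameMetric μ ν r b (u p.1) (u p.2)) atTop (𝓝 0) :=
    Metric.tendsto_nhds.2 fun ε hε => eventually_atTop_prod_self'.2 <|
      (hu ε hε).imp fun N hN m hm n hn => by
        rw [Real.dist_0_eq_abs, abs_of_nonneg (tameMetric_nonneg _ _)]; exact hN m hm n hn
  obtain ⟨L, hLtame, hLlim⟩ := exists_tendsto_tameOpNorm_sub hμtop hνtop hν (fun k => (u k).1)
    (fun k => (u k).2) ((tendsto_frechetSum_zero_iff fun _ => tameOpNorm_nonneg μ ν r _).1 hD)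
  have hconv : Tendsto (fun k => tameMetric μ ν r b (u k) ⟨L, hLtame⟩) atTop (𝓝 0) :=
    (tendsto_frechetSum_zero_iff fun _ => tameOpNorm_nonneg μ ν r _).2 hLlim
  exact ⟨⟨L, hLtame⟩, fun ε hε => eventually_atTop.1 (hconv.eventually (eventually_lt_nhds hε))⟩

/-- Let `V` carry an increasing sequence of seminorms `(μ n)` generating its topology,
and let `W` be a complete Hausdorff real tvs whose topology is generated by an
increasing, point-separating sequence of seminorms `(ν n)`.  Then for any `r b : ℕ`,
the space `T_{r,b}L(V,W)` with the metric `D(f,g) = Σ_{n≥b} 2⁻ⁿ min(1,‖f-g‖_n)` is a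
complete metric space. -/
theorem stmt14 (V W : Type*)
    [AddCommGroup V] [Module ℝ V] [TopologicalSpace V]
    [AddCommGroup W] [Module ℝ W] [UniformSpace W] [IsUniformAddGroup W]
    [CompleteSpace W]
    (μ : SeminormFamily ℝ V ℕ) (ν : SeminormFamily ℝ W ℕ)
    (hμtop : WithSeminorms μ) (hνtop : WithSeminorms ν)
    (hμmono : ∀ (n : ℕ) (v : V), μ n v ≤ μ (n + 1) v)
    (hνmono : ∀ (n : ℕ) (w : W), ν n w ≤ ν (n + 1) w)
    (hνsep : ∀ w : W, (∀ n, ν n w = 0) → w = 0)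
    (r b : ℕ) :
    (∀ f g : TameLinearMaps μ ν r b, tameMetric μ ν r b f g = 0 ↔ f = g) ∧
    (∀ f g : TameLinearMaps μ ν r b, tameMetric μ ν r b f g = tameMetric μ ν r b g f) ∧
    (∀ f g h : TameLinearMaps μ ν r b,
      tameMetric μ ν r b f h ≤ tameMetric μ ν r b f g + tameMetric μ ν r b g h) ∧
    (∀ u : ℕ → TameLinearMaps μ ν r b,
      (∀ ε : ℝ, 0 < ε → ∃ N, ∀ m, N ≤ m → ∀ n, N ≤ n →
        tameMetric μ ν r b (u m) (u n) < ε) →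
      ∃ L : TameLinearMaps μ ν r b, ∀ ε : ℝ, 0 < ε → ∃ N, ∀ n, N ≤ n →
        tameMetric μ ν r b (u n) L < ε) :=
  stmt14_general V W μ ν hμtop hνtop hνmono hνsep r b
end

section
/- The space C^∞([0,1],ℝ), equipped with the seminorms μ_i(f) := max_{k ≤ i} sup_{x∈[0,1]} |f^{(k)}(x)|, is step-full: for every real s > 1 there exist M > 0 and v ∈ C^∞([0,1],ℝ) such that s^i < μ_i(v) < M·(4s)^i for every i ∈ ℕ. -/
/-!
Take `v x = exp (s x)`. Its `k`-th derivative is `s ^ k * exp (s x)`, which for `s ≥ 1` is largest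
at `k = i`, `x = 1`, so `μ_i(v) = s ^ i * exp s`. This lies strictly between `s ^ i` and
`(exp s + 1) * (4 s) ^ i`.
-/

/-- The seminorm `μ_i(f) = max_{k ≤ i} sup_{x ∈ [0,1]} |f⁽ᵏ⁾(x)|` on smooth functions
on `[0,1]`, derivatives taken within `[0,1]`. -/
noncomputable def smoothIccSeminorm (i : ℕ) (f : ℝ → ℝ) : ℝ :=
  ⨆ k : Fin (i + 1), ⨆ x : Set.Icc (0:ℝ) 1,
    |iteratedDerivWithin k f (Set.Icc (0:ℝ) 1) x|

open Set Real

theorem smoothIccSeminorm_eq_of_attained {i : ℕ} {f : ℝ → ℝ} {B : ℝ}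
    (hle : ∀ k ≤ i, ∀ x ∈ Icc (0:ℝ) 1, |iteratedDerivWithin k f (Icc 0 1) x| ≤ B)
    {k₀ : ℕ} (hk₀ : k₀ ≤ i) {x₀ : ℝ} (hx₀ : x₀ ∈ Icc (0:ℝ) 1)
    (hB : |iteratedDerivWithin k₀ f (Icc 0 1) x₀| = B) :
    smoothIccSeminorm i f = B := by
  have : Nonempty (Icc (0:ℝ) 1) := ⟨⟨x₀, hx₀⟩⟩
  have hinner : ∀ k : Fin (i + 1),
      BddAbove (range fun x : Icc (0:ℝ) 1 => |iteratedDerivWithin k f (Icc 0 1) x|) :=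
    fun k => ⟨B, by rintro _ ⟨x, rfl⟩; exact hle k (Nat.lt_succ_iff.mp k.2) x x.2⟩
  refine le_antisymm (ciSup_le fun k => ciSup_le fun x => hle k (Nat.lt_succ_iff.mp k.2) x x.2) ?_
  calc B = |iteratedDerivWithin (⟨k₀, Nat.lt_succ_of_le hk₀⟩ : Fin (i + 1)) f (Icc 0 1)
        (⟨x₀, hx₀⟩ : Icc (0:ℝ) 1)| := hB.symm
    _ ≤ _ := le_ciSup (hinner _) _
    _ ≤ smoothIccSeminorm i f := le_ciSup (f := fun k : Fin (i + 1) =>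
        ⨆ x : Icc (0:ℝ) 1, |iteratedDerivWithin k f (Icc 0 1) x|) (finite_range _).bddAbove _

theorem iteratedDerivWithin_exp_const_mul_of_mem {S : Set ℝ} (hS : UniqueDiffOn ℝ S)
    (k : ℕ) (c : ℝ) {x : ℝ} (hx : x ∈ S) :
    iteratedDerivWithin k (fun y => exp (c * y)) S x = c ^ k * exp (c * x) := by
  rw [iteratedDerivWithin_eq_iteratedDeriv hS (by fun_prop) hx, iteratedDeriv_exp_const_mul]

theorem smoothIccSeminorm_exp_const_mul {c : ℝ} (hc : 1 ≤ c) (i : ℕ) :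
    smoothIccSeminorm i (fun y => exp (c * y)) = c ^ i * exp c := by
  have hderiv : ∀ k, ∀ x ∈ Icc (0:ℝ) 1,
      |iteratedDerivWithin k (fun y => exp (c * y)) (Icc 0 1) x| = c ^ k * exp (c * x) := by
    intro k x hx
    rw [iteratedDerivWithin_exp_const_mul_of_mem (uniqueDiffOn_Icc zero_lt_one) k c hx,
      abs_of_nonneg (by positivity)]
  refine smoothIccSeminorm_eq_of_attained (fun k hk x hx => ?_) le_rfl
    (right_mem_Icc.mpr zero_le_one) (by rw [hderiv i 1 (right_mem_Icc.mpr zero_le_one), mul_one])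
  rw [hderiv k x hx]
  exact mul_le_mul (pow_le_pow_right₀ hc hk) (exp_le_exp.mpr (by nlinarith [hx.2]))
    (by positivity) (by positivity)

/-- `C^∞([0,1],ℝ)` with the seminorms `μ_i(f) = max_{k ≤ i} sup |f⁽ᵏ⁾|` is step-full:
for every `s > 1` there are `M > 0` and a smooth `v` with
`s ^ i < μ_i(v) < M * (4 s) ^ i` for every `i`. -/
theorem stmt17 :
    ∀ s : ℝ, 1 < s → ∃ M : ℝ, 0 < M ∧ ∃ v : ℝ → ℝ,
      ContDiffOn ℝ (⊤ : ℕ∞) v (Set.Icc (0:ℝ) 1) ∧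
      ∀ i : ℕ, s ^ i < smoothIccSeminorm i v ∧
        smoothIccSeminorm i v < M * (4 * s) ^ i := by
  intro s hs
  refine ⟨exp s + 1, by positivity, fun y => exp (s * y), by fun_prop, fun i => ?_⟩
  rw [smoothIccSeminorm_exp_const_mul hs.le]
  have hpow : 0 < s ^ i := by positivity
  constructor
  · exact lt_mul_of_one_lt_right hpow (one_lt_exp_iff.mpr (by linarith))
  · calc s ^ i * exp s ≤ (4 * s) ^ i * exp s := by gcongr; linarith
      _ < (4 * s) ^ i * (exp s + 1) := by gcongr; linarith
      _ = (exp s + 1) * (4 * s) ^ i := mul_comm _ _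
end

section
/- Let d be any translation-invariant metric on the space ℝ^ℕ of all real sequences inducing the product topology. Then (ℝ^ℕ, d) is not strict: there exists v ∈ ℝ^ℕ such that sup_{r>0} d(r·v, 0)/r = ∞. -/
open Filter Set Topology

/-- Let `d` be any translation-invariant metric on the space `ℝ^ℕ` of real sequences
inducing the product topology.  Then `(ℝ^ℕ, d)` is not strict: there is a sequence `v`
with `sup_{r > 0} d(r • v, 0) / r = ∞`, i.e. for every bound `C` there is `r > 0` with
`d(r • v, 0) > C * r`. -/
theorem stmt19 (d : (ℕ → ℝ) → (ℕ → ℝ) → ℝ)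
    (hd_self : ∀ x, d x x = 0)
    (hd_eq : ∀ x y, d x y = 0 → x = y)
    (hd_symm : ∀ x y, d x y = d y x)
    (hd_triangle : ∀ x y z, d x z ≤ d x y + d y z)
    (hd_trans : ∀ x y z : ℕ → ℝ, d (x + z) (y + z) = d x y)
    (hd_top : ∀ (u : ℕ → ℝ) (s : Set (ℕ → ℝ)),
      s ∈ nhds u ↔ ∃ ε : ℝ, 0 < ε ∧ {v | d v u < ε} ⊆ s) :
    ∃ v : ℕ → ℝ, ∀ C : ℝ, ∃ r : ℝ, 0 < r ∧ C * r < d (r • v) 0 := by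
  by_contra hcon
  push_neg at hcon
  -- nonnegativity of d
  have dnn : ∀ x y, 0 ≤ d x y := by
    intro x y
    nlinarith [hd_triangle x y x, hd_self x, hd_symm x y]
  -- d(-x, 0) = d(x, 0)
  have dneg : ∀ x : ℕ → ℝ, d (-x) 0 = d x 0 := by
    intro x
    have := hd_trans (-x) 0 x
    simp at this
    rw [← this, hd_symm]
  -- tendsto d v u → 0 as v → u
  have htend : ∀ u : ℕ → ℝ, Tendsto (fun v => d v u) (nhds u) (nhds 0) := by
    intro u
    rw [Metric.tendsto_nhds]
    intro ε hε
    have hmem : {v | d v u < ε} ∈ nhds u := (hd_top u _).mpr ⟨ε, hε, subset_rfl⟩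
    filter_upwards [hmem] with v hv
    simpa [Real.dist_eq, abs_of_nonneg (dnn v u)] using hv
  -- continuity of v ↦ d v 0
  have dcont : Continuous fun v : ℕ → ℝ => d v 0 := by
    rw [continuous_iff_continuousAt]
    intro u
    have h1 := htend u
    have h2 : Tendsto (fun v => dist (d v 0) (d u 0)) (nhds u) (nhds 0) := by
      apply squeeze_zero (fun v => dist_nonneg) _ h1
      intro v
      rw [Real.dist_eq, abs_sub_le_iff]
      constructor
      · have := hd_triangle v u 0; linarith
      · have := hd_triangle u v 0; rw [hd_symm u v] at this; linarith
    exact tendsto_iff_dist_tendsto_zero.mpr h2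
  -- the closed sets
  set U : ℕ → Set (ℕ → ℝ) := fun k => {v | ∀ r : ℝ, 0 < r → d (r • v) 0 ≤ k * r} with hU
  have hclosed : ∀ k, IsClosed (U k) := by
    intro k
    have : U k = ⋂ r : ℝ, {v | 0 < r → d (r • v) 0 ≤ k * r} := by
      ext v; simp [hU, Set.mem_iInter]
    rw [this]
    apply isClosed_iInter
    intro r
    by_cases hr : 0 < r
    · have : {v : ℕ → ℝ | 0 < r → d (r • v) 0 ≤ k * r}
          = (fun v : ℕ → ℝ => d (r • v) 0) ⁻¹' Set.Iic ((k : ℝ) * r) := by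
        ext v; simp [hr]
      rw [this]
      exact IsClosed.preimage (dcont.comp (continuous_const_smul r)) isClosed_Iic
    · have : {v : ℕ → ℝ | 0 < r → d (r • v) 0 ≤ k * r} = Set.univ := by
        ext v; simp [hr]
      rw [this]; exact isClosed_univ
  have hcover : ∀ v : ℕ → ℝ, ∃ k : ℕ, v ∈ U k := by
    intro v
    obtain ⟨C, hC⟩ := hcon v
    obtain ⟨k, hk⟩ := exists_nat_ge C
    exact ⟨k, fun r hr => (hC r hr).trans (mul_le_mul_of_nonneg_right hk hr.le)⟩
  have hunion : (⋃ k, U k) = Set.univ := by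
    ext v; simp only [Set.mem_iUnion, Set.mem_univ, iff_true]; exact hcover v
  -- Baire category
  obtain ⟨k, x0, hx0⟩ := nonempty_interior_of_iUnion_of_closed hclosed hunion
  have hUk : U k ∈ nhds x0 := mem_interior_iff_mem_nhds.mp hx0
  obtain ⟨ε, hε, hball⟩ := (hd_top x0 (U k)).mp hUk
  obtain ⟨k', hk'⟩ := hcover (-x0)
  set K : ℝ := (k : ℝ) + (k' : ℝ) with hK
  have hK0 : 0 ≤ K := by positivity
  -- key bound: every w in the d-ball of radius ε around 0 satisfies d(r•w,0) ≤ K r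
  have key : ∀ w : ℕ → ℝ, d w 0 < ε → ∀ r : ℝ, 0 < r → d (r • w) 0 ≤ K * r := by
    intro w hw r hr
    have h1 : x0 + w ∈ U k := by
      apply hball
      have heq : d (w + x0) x0 = d w 0 := by
        have := hd_trans w 0 x0
        simpa using this
      show d (x0 + w) x0 < ε
      rw [add_comm x0 w, heq]
      exact hw
    have h2 : d (r • (x0 + w)) 0 ≤ (k : ℝ) * r := h1 r hr
    have h3 : d (r • (-x0)) 0 ≤ (k' : ℝ) * r := hk' r hr
    have h4 : d (r • x0) 0 ≤ (k' : ℝ) * r := by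
      rwa [smul_neg, dneg] at h3
    have h5 : d (r • w) 0 = d (r • (x0 + w)) (r • x0) := by
      have := hd_trans (r • w) 0 (r • x0)
      simp only [zero_add] at this
      rw [← this, smul_add]
      ring_nf
    have h6 := hd_triangle (r • (x0 + w)) 0 (r • x0)
    have h7 : d (0 : ℕ → ℝ) (r • x0) = d (r • x0) 0 := hd_symm _ _
    have h8 : K * r = (k : ℝ) * r + (k' : ℝ) * r := by rw [hK]; ring
    rw [h5]
    linarith
  -- now derive the contradiction using unit vectors
  have apos : ∀ n : ℕ, 0 < d (Pi.single n (1 : ℝ)) 0 := by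
    intro n
    rcases lt_or_eq_of_le (dnn (Pi.single n (1 : ℝ)) 0) with h | h
    · exact h
    · exfalso
      have := hd_eq _ _ h.symm
      have h1 := congrFun this n
      simp at h1
  set c : ℕ → ℝ := fun n => (K + 1) / d (Pi.single n (1 : ℝ)) 0 with hc
  have cpos : ∀ n, 0 < c n := fun n => div_pos (by linarith) (apos n)
  set w : ℕ → ℕ → ℝ := fun n => c n • (Pi.single n (1 : ℝ) : ℕ → ℝ) with hw
  have hwt : Tendsto w atTop (nhds 0) := by
    rw [tendsto_pi_nhds]
    intro i
    apply Tendsto.congr' _ tendsto_const_nhds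
    filter_upwards [Filter.eventually_ge_atTop (i + 1)] with n hn
    have hne : i ≠ n := by omega
    simp [hw, Pi.single_eq_of_ne hne]
  have hmem : {v : ℕ → ℝ | d v 0 < ε} ∈ nhds (0 : ℕ → ℝ) :=
    (hd_top 0 _).mpr ⟨ε, hε, subset_rfl⟩
  obtain ⟨n, hn⟩ := (hwt.eventually_mem hmem).exists
  -- apply key with r = 1 / c n
  have hr : (0 : ℝ) < 1 / c n := one_div_pos.mpr (cpos n)
  have := key (w n) hn (1 / c n) hr
  have heq : (1 / c n) • w n = Pi.single n (1 : ℝ) := by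
    rw [hw, smul_smul, one_div, inv_mul_cancel₀ (cpos n).ne', one_smul]
  rw [heq] at this
  have han := apos n
  have : d (Pi.single n (1 : ℝ)) 0 ≤ K * (d (Pi.single n (1 : ℝ)) 0 / (K + 1)) := by
    rw [hc] at this
    calc d (Pi.single n (1 : ℝ)) 0 ≤ K * (1 / ((K + 1) / d (Pi.single n (1 : ℝ)) 0)) := this
    _ = K * (d (Pi.single n (1 : ℝ)) 0 / (K + 1)) := by
        rw [one_div_div]
  have hK1 : (0 : ℝ) < K + 1 := by linarith
  have hlt : K / (K + 1) < 1 := (div_lt_one hK1).mpr (by linarith)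
  have h9 : K * (d (Pi.single n (1 : ℝ)) 0 / (K + 1))
      = K / (K + 1) * d (Pi.single n (1 : ℝ)) 0 := by ring
  have h10 : K / (K + 1) * d (Pi.single n (1 : ℝ)) 0 < 1 * d (Pi.single n (1 : ℝ)) 0 :=
    mul_lt_mul_of_pos_right hlt han
  rw [h9] at this
  linarith
end
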